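/- arXiv:2003.07359 — 4 statements merged into one kernel-verified Lean document; each statement's English description precedes it below -/
import Mathlib

section
/- For |q|<1, the Lambert-type series $\sum_{n=1}^{\infty} \frac{q^n}{1+q^{2n}}$ equals the double series $\sum_{n=1}^{\infty} \sum_{j=-n+1}^{n} q^{n^2+j^2}$. -/
/-!
Both sides are power series in `q`. Expanding `q^n / (1 + q^(2n))` geometrically and collecting
powers gives `∑ a(N) q^N` on the left, with `a(N) = ∑_{d ∣ N} χ₄(d)`. On the right, the index
`(n, j)` is the Gaussian integer `(n + 1) + j i` and the exponent is its norm, so the right side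
is `∑ s(N) q^N`, where `s(N)` counts the points of norm `N` in a sector that is a fundamental
domain for the four units; hence `s(N) = r₂(N) / 4`. Jacobi's `r₂(N) = 4 a(N)` then follows
prime by prime: for `p ∤ M`, both `r₂(p^k M) / r₂(M)` and `a(p^k)` equal `∑_{i ≤ k} χ₄(p)^i`,
because `1 + i` and the primes `p ≡ 3 mod 4` divide every Gaussian integer whose norm they
divide, while a prime `p ≡ 1 mod 4` is `π π̄` with `π ∤ π̄`.
-/

open Finset ArithmeticFunction
open scoped ArithmeticFunction.zeta

def chi4 : ArithmeticFunction ℤ := ⟨fun n => ZMod.χ₄ n, by simp⟩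

@[simp]
theorem chi4_apply (n : ℕ) : chi4 n = ZMod.χ₄ n := rfl

theorem isMultiplicative_chi4 : chi4.IsMultiplicative :=
  ⟨by rw [chi4_apply, Nat.cast_one, map_one],
    fun _ => by rw [chi4_apply, chi4_apply, chi4_apply, Nat.cast_mul, map_mul]⟩

theorem chi4_mul_zeta_prime_pow {p : ℕ} (hp : p.Prime) (k : ℕ) :
    (chi4 * ζ) (p ^ k) = ∑ i ∈ range (k + 1), ZMod.χ₄ p ^ i := by
  rw [coe_mul_zeta_apply, Nat.sum_divisors_prime_pow hp]
  simp only [chi4_apply, Nat.cast_pow, map_pow]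

section Series

variable {𝕜 : Type*} [NormedField 𝕜]

theorem div_one_add_sq_eq_tsum_χ₄ {r : 𝕜} (hr : ‖r‖ < 1) :
    r / (1 + r ^ 2) = ∑' d : ℕ, (ZMod.χ₄ (d + 1 : ℕ) : 𝕜) * r ^ (d + 1) := by
  have hr2 : ‖-r ^ 2‖ < 1 := by
    rw [norm_neg, norm_pow]; exact pow_lt_one₀ (norm_nonneg r) hr two_ne_zero
  have heven (k : ℕ) :
      (ZMod.χ₄ (2 * k + 1 : ℕ) : 𝕜) * r ^ (2 * k + 1) = r * (-r ^ 2) ^ k := by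
    rw [ZMod.χ₄_eq_neg_one_pow (by omega), show (2 * k + 1) / 2 = k by omega]
    push_cast; ring
  have hodd (k : ℕ) : (ZMod.χ₄ (2 * k + 1 + 1 : ℕ) : 𝕜) * r ^ (2 * k + 1 + 1) = 0 := by
    rw [ZMod.χ₄_nat_eq_if_mod_four, if_pos (by omega)]; simp
  rw [← tsum_even_add_odd (f := fun d : ℕ => (ZMod.χ₄ (d + 1 : ℕ) : 𝕜) * r ^ (d + 1))]
  · simp only [heven, hodd, tsum_zero, add_zero, tsum_mul_left,
      tsum_geometric_of_norm_lt_one hr2]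
    rw [sub_neg_eq_add, div_eq_mul_inv]
  · simpa only [heven] using (summable_geometric_of_norm_lt_one hr2).mul_left r
  · simpa only [hodd] using summable_zero

variable [CompleteSpace 𝕜]

theorem tsum_mul_pow_eq_tsum_fiberwise {α : Type*} (w : α → 𝕜) (g : α → ℕ) (q : 𝕜)
    (h : Summable fun a => w a * q ^ g a) :
    ∑' a, w a * q ^ g a = ∑' N, (∑' a : g ⁻¹' {N}, w a) * q ^ N := by
  rw [← (h.hasSum.tsum_fiberwise g).tsum_eq]
  refine tsum_congr fun N => ?_
  rw [← tsum_mul_right]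
  exact tsum_congr fun a => by rw [show g a = N from a.2]

theorem tsum_pow_eq_tsum_card_fiber_mul_pow {α : Type*} (g : α → ℕ) (q : 𝕜)
    (h : Summable fun a => q ^ g a) :
    ∑' a, q ^ g a = ∑' N, (Nat.card (g ⁻¹' {N}) : 𝕜) * q ^ N := by
  simpa [tsum_const] using
    tsum_mul_pow_eq_tsum_fiberwise (fun _ => (1 : 𝕜)) g q (by simpa using h)

theorem tsum_tsum_mul_pow_mul_eq_tsum_sum_divisors (f : ℕ → 𝕜) {C : ℝ}
    (hf : ∀ n, ‖f n‖ ≤ C) {q : 𝕜} (hq : ‖q‖ < 1) :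
    ∑' m : ℕ, ∑' d : ℕ, f (d + 1) * q ^ ((m + 1) * (d + 1)) =
      ∑' N : ℕ, (∑ d ∈ N.divisors, f d) * q ^ N := by
  have hs : Summable fun x : ℕ × ℕ => f (x.2 + 1) * q ^ ((x.1 + 1) * (x.2 + 1)) := by
    have hgeom := summable_geometric_of_lt_one (norm_nonneg q) hq
    refine Summable.of_norm_bounded (((hgeom.mul_of_nonneg hgeom (fun _ => by positivity)
      (fun _ => by positivity)).mul_left C)) fun x => ?_
    rw [norm_mul, norm_pow, ← pow_add]
    exact mul_le_mul (hf _) (pow_le_pow_of_le_one (norm_nonneg q) hq.le (by nlinarith))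
      (by positivity) ((norm_nonneg _).trans (hf 0))
  rw [← hs.tsum_prod' hs.prod_factor,
    tsum_mul_pow_eq_tsum_fiberwise (fun x : ℕ × ℕ => f (x.2 + 1)) _ q hs]
  refine tsum_congr fun N => ?_
  let e : ((fun x : ℕ × ℕ => (x.1 + 1) * (x.2 + 1)) ⁻¹' {N}) ≃ N.divisors :=
    { toFun x := ⟨x.1.2 + 1, Nat.mem_divisors.mpr ⟨Dvd.intro_left _ x.2, by
          rw [← show (x.1.1 + 1) * (x.1.2 + 1) = N from x.2]; positivity⟩⟩
      invFun d := ⟨(N / d - 1, d - 1), by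
        obtain ⟨hdN, hN⟩ := Nat.mem_divisors.mp d.2
        have hd := Nat.pos_of_mem_divisors d.2
        have := Nat.div_pos (Nat.le_of_dvd (Nat.pos_of_ne_zero hN) hdN) hd
        show (N / d - 1 + 1) * (d - 1 + 1) = N
        rw [Nat.sub_add_cancel this, Nat.sub_add_cancel hd, Nat.div_mul_cancel hdN]⟩
      left_inv x := by
        obtain ⟨⟨m, d⟩, hx⟩ := x
        obtain rfl : (m + 1) * (d + 1) = N := hx
        ext <;> simp
      right_inv d := by
        ext; simp [Nat.sub_add_cancel (Nat.pos_of_mem_divisors d.2)] }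
  rw [← Finset.tsum_subtype, ← e.tsum_eq]
  rfl

theorem tsum_pow_div_one_add_pow_eq_tsum_chi4_mul_zeta {q : 𝕜} (hq : ‖q‖ < 1) :
    ∑' n : ℕ, q ^ (n + 1) / (1 + q ^ (2 * (n + 1))) =
      ∑' N : ℕ, ((chi4 * ζ) N : 𝕜) * q ^ N := by
  have hterm (n : ℕ) : q ^ (n + 1) / (1 + q ^ (2 * (n + 1))) =
      ∑' d : ℕ, (ZMod.χ₄ (d + 1 : ℕ) : 𝕜) * q ^ ((n + 1) * (d + 1)) := by
    have hr : ‖q ^ (n + 1)‖ < 1 := by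
      rw [norm_pow]; exact pow_lt_one₀ (norm_nonneg q) hq n.succ_ne_zero
    simpa only [← pow_mul, mul_comm 2] using div_one_add_sq_eq_tsum_χ₄ hr
  rw [tsum_congr hterm, tsum_tsum_mul_pow_mul_eq_tsum_sum_divisors (fun d => (ZMod.χ₄ d : 𝕜))
    (C := 1) (fun d => ?_) hq]
  · exact tsum_congr fun N => by rw [coe_mul_zeta_apply]; push_cast; rfl
  · rcases ZMod.isQuadratic_χ₄ d with h | h | h <;> simp [h]

theorem summable_pow_sq_add_natAbs_sq {q : 𝕜} (hq : ‖q‖ < 1) :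
    Summable fun x : Σ n : ℕ, Icc (-(n : ℤ)) (n + 1) =>
      q ^ ((x.1 + 1) ^ 2 + x.2.1.natAbs ^ 2) := by
  have hbound : Summable fun n : ℕ => (2 * n + 2 : ℝ) * ‖q‖ ^ n := by
    have := ((summable_pow_mul_geometric_of_norm_lt_one 1 (r := ‖q‖)
      (by rwa [norm_norm])).mul_left 2).add
        ((summable_geometric_of_lt_one (norm_nonneg q) hq).mul_left 2)
    simpa [add_mul, mul_assoc] using this
  refine Summable.of_norm ((summable_sigma_of_nonneg fun _ => norm_nonneg _).mpr
    ⟨fun _ => Summable.of_finite, hbound.of_nonneg_of_le (fun _ => by positivity) fun n => ?_⟩)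
  rw [tsum_fintype]
  calc ∑ j, ‖q ^ ((n + 1) ^ 2 + j.1.natAbs ^ 2)‖
      ≤ ∑ _j : Icc (-(n : ℤ)) (n + 1), ‖q‖ ^ n :=
        sum_le_sum fun j _ => by
          rw [norm_pow]; exact pow_le_pow_of_le_one (norm_nonneg q) hq.le (by nlinarith)
    _ = (2 * n + 2 : ℝ) * ‖q‖ ^ n := by
        rw [sum_const, card_univ, Fintype.card_coe, Int.card_Icc, nsmul_eq_mul,
          show ((n : ℤ) + 1 + 1 - -n).toNat = 2 * n + 2 by omega]
        push_cast; ring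

end Series

theorem Zsqrtd.norm_pow {d : ℤ} (z : Zsqrtd d) (n : ℕ) : (z ^ n).norm = z.norm ^ n :=
  map_pow Zsqrtd.normMonoidHom z n

namespace GaussianInt

local notation "ℤ[i]" => GaussianInt

noncomputable def r₂ (N : ℕ) : ℕ := Nat.card {z : ℤ[i] // z.norm = N}

instance finite_norm_eq (N : ℕ) : Finite {z : ℤ[i] // z.norm = N} := by
  refine Set.Finite.to_subtype ((((Set.finite_Icc (-(N : ℤ)) N).prod
    (Set.finite_Icc (-(N : ℤ)) N)).image (fun x => (⟨x.1, x.2⟩ : ℤ[i]))).subset ?_)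
  intro z (hz : z.norm = N)
  rw [Zsqrtd.norm_def] at hz
  refine ⟨(z.re, z.im), ⟨⟨?_, ?_⟩, ?_, ?_⟩, rfl⟩ <;>
    nlinarith [mul_self_nonneg (z.re - 1), mul_self_nonneg (z.re + 1),
      mul_self_nonneg (z.im - 1), mul_self_nonneg (z.im + 1)]

theorem prime_of_natAbs_norm_prime {π : ℤ[i]} (h : π.norm.natAbs.Prime) : Prime π := by
  refine irreducible_iff_prime.mp
    ⟨fun hu => h.ne_one (Zsqrtd.norm_eq_one_iff.mpr hu), fun a b hab => ?_⟩
  rw [hab, Zsqrtd.norm_mul, Int.natAbs_mul, Nat.prime_mul_iff] at h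
  rcases h with ⟨-, hb⟩ | ⟨-, ha⟩
  · exact Or.inr (Zsqrtd.norm_eq_one_iff.mp hb)
  · exact Or.inl (Zsqrtd.norm_eq_one_iff.mp ha)

theorem dvd_of_dvd_norm {π z : ℤ[i]} (hπ : Prime π) (hπs : π ∣ star π)
    (h : π ∣ (z.norm : ℤ[i])) : π ∣ z := by
  rw [Zsqrtd.norm_eq_mul_conj] at h
  rcases hπ.dvd_or_dvd h with h | h
  · exact h
  · exact hπs.trans <| by
      simpa only [starRingEnd_apply, star_star] using map_dvd (starRingEnd ℤ[i]) h

theorem card_norm_eq_mul_and_dvd {π : ℤ[i]} {c : ℕ} (hc : π.norm = c) (hπ : π ≠ 0)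
    (M : ℕ) : Nat.card {z : ℤ[i] // z.norm = ↑(c * M) ∧ π ∣ z} = r₂ M := by
  have hc0 : (c : ℤ) ≠ 0 := hc ▸ (norm_eq_zero.not.mpr hπ)
  refine (Nat.card_congr (Equiv.ofBijective
    (fun w : {w : ℤ[i] // w.norm = M} => (⟨π * w, ?_, dvd_mul_right _ _⟩ :
      {z : ℤ[i] // z.norm = ↑(c * M) ∧ π ∣ z})) ⟨?_, ?_⟩)).symm
  · rw [Zsqrtd.norm_mul, hc, w.2]; push_cast; ring
  · intro w w' h
    exact Subtype.ext (mul_left_cancel₀ hπ (congrArg Subtype.val h))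
  · rintro ⟨z, hz, w, rfl⟩
    refine ⟨⟨w, mul_left_cancel₀ hc0 ?_⟩, rfl⟩
    rw [Zsqrtd.norm_mul, hc] at hz
    rw [hz]; push_cast; ring

theorem r₂_mul_eq_of_forall_dvd {π : ℤ[i]} {c M : ℕ} (hc : π.norm = c) (hπ : π ≠ 0)
    (h : ∀ z : ℤ[i], z.norm = ↑(c * M) → π ∣ z) : r₂ (c * M) = r₂ M := by
  rw [← card_norm_eq_mul_and_dvd hc hπ M]
  exact Nat.card_congr (Equiv.subtypeEquivRight fun z => ⟨fun hz => ⟨hz, h z hz⟩, And.left⟩)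

theorem r₂_mul_eq_of_dvd_star {π : ℤ[i]} (hπ : Prime π) (hπs : π ∣ star π) {c : ℕ}
    (hc : π.norm = c) (M : ℕ) : r₂ (c * M) = r₂ M := by
  refine r₂_mul_eq_of_forall_dvd hc hπ.ne_zero fun z hz => dvd_of_dvd_norm hπ hπs ?_
  rw [hz, Int.cast_natCast, Nat.cast_mul, ← Int.cast_natCast c, ← hc, Zsqrtd.norm_eq_mul_conj]
  exact (dvd_mul_right _ _).mul_right _

theorem r₂_two_pow_mul (k M : ℕ) : r₂ (2 ^ k * M) = r₂ M := by
  have hnorm : (⟨1, 1⟩ : ℤ[i]).norm = (2 : ℕ) := by decide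
  have hprime : Prime (⟨1, 1⟩ : ℤ[i]) := prime_of_natAbs_norm_prime (by rw [hnorm]; norm_num)
  have hstar : (⟨1, 1⟩ : ℤ[i]) ∣ star ⟨1, 1⟩ := ⟨⟨0, -1⟩, by decide⟩
  induction k with
  | zero => simp
  | succ k ih => rw [pow_succ', mul_assoc, r₂_mul_eq_of_dvd_star hprime hstar hnorm, ih]

section ModFourEqThree

variable {p : ℕ} (hp : p.Prime) (hp3 : p % 4 = 3)
include hp hp3

theorem prime_natCast_of_mod_four_eq_three : Prime (p : ℤ[i]) :=
  have := Fact.mk hp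
  prime_of_nat_prime_of_mod_four_eq_three p hp3

theorem r₂_mul_self_mul (M : ℕ) : r₂ (p * p * M) = r₂ M :=
  r₂_mul_eq_of_dvd_star (prime_natCast_of_mod_four_eq_three hp hp3)
    (by rw [star_natCast]) (by rw [Zsqrtd.norm_natCast]; push_cast; ring) M

theorem r₂_mul_eq_zero {M : ℕ} (hpM : ¬p ∣ M) : r₂ (p * M) = 0 := by
  refine @Nat.card_of_isEmpty _ ⟨fun ⟨z, hz⟩ => hpM ?_⟩
  obtain ⟨w, rfl⟩ := dvd_of_dvd_norm (prime_natCast_of_mod_four_eq_three hp hp3)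
    (by rw [star_natCast]) (by rw [hz]; push_cast; exact dvd_mul_right _ _)
  rw [Zsqrtd.norm_mul, Zsqrtd.norm_natCast] at hz
  have hp0 : (p : ℤ) ≠ 0 := by exact_mod_cast hp.ne_zero
  exact Int.natCast_dvd_natCast.mp
    ⟨w.norm, mul_left_cancel₀ hp0 (by push_cast at hz; linarith)⟩

theorem r₂_pow_mul_of_mod_four_eq_three {M : ℕ} (hpM : ¬p ∣ M) :
    ∀ k, (r₂ (p ^ k * M) : ℤ) = (∑ i ∈ range (k + 1), (-1) ^ i) * r₂ M
  | 0 => by simp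
  | 1 => by simp [r₂_mul_eq_zero hp hp3 hpM]
  | k + 2 => by
    rw [pow_add, mul_comm (p ^ k), sq, mul_assoc, r₂_mul_self_mul hp hp3,
      r₂_pow_mul_of_mod_four_eq_three hpM k, sum_range_succ _ (k + 2),
      sum_range_succ _ (k + 1), pow_succ, pow_succ]
    ring

end ModFourEqThree

/-- With `p = a² + b²` and `π = a + b i`: if `π̄ = π t` then `t` is a unit, and each of the four
units forces `a = 0`, `b = 0` or `a = b`. -/
theorem exists_norm_eq_not_dvd_star {p : ℕ} (hp : p.Prime) (hp1 : p % 4 = 1) :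
    ∃ π : ℤ[i], π.norm = p ∧ ¬π ∣ star π := by
  have := Fact.mk hp
  obtain ⟨a, b, hab⟩ := Nat.Prime.sq_add_sq (p := p) (by omega)
  have hnorm : (⟨a, b⟩ : ℤ[i]).norm = p := by
    rw [Zsqrtd.norm_def, ← hab]; push_cast; ring
  refine ⟨⟨a, b⟩, hnorm, fun ⟨t, ht⟩ => ?_⟩
  have ht1 : t.re * t.re + t.im * t.im = 1 := by
    have := congrArg Zsqrtd.norm ht
    rw [Zsqrtd.norm_conj, Zsqrtd.norm_mul, hnorm, Zsqrtd.norm_def] at this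
    have hp0 : (p : ℤ) ≠ 0 := by exact_mod_cast hp.ne_zero
    nlinarith [mul_left_cancel₀ hp0 (this.symm.trans (mul_one _).symm)]
  have hre := congrArg Zsqrtd.re ht
  have him := congrArg Zsqrtd.im ht
  simp only [Zsqrtd.re_star, Zsqrtd.im_star, Zsqrtd.re_mul, Zsqrtd.im_mul] at hre him
  obtain ⟨h1, h2, h3, h4⟩ : t.re ≤ 1 ∧ -1 ≤ t.re ∧ t.im ≤ 1 ∧ -1 ≤ t.im := by
    refine ⟨?_, ?_, ?_, ?_⟩ <;> nlinarith [mul_self_nonneg t.re, mul_self_nonneg t.im]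
  have hab' : a = 0 ∨ b = 0 ∨ a = b := by
    interval_cases t.re <;> interval_cases t.im <;> simp at ht1 hre him <;> omega
  have hsq : ¬IsSquare p := hp.prime.not_isSquare
  rcases hab' with rfl | rfl | rfl
  · exact hsq ⟨b, by rw [← hab]; ring⟩
  · exact hsq ⟨a, by rw [← hab]; ring⟩
  · omega

section NotDvdStar

variable {π : ℤ[i]} {p M : ℕ} (hπ : Prime π) (hπp : π.norm = p) (hπs : ¬π ∣ star π)
  (hpM : ¬p ∣ M)
include hπ hπp hπs hpM

/-- `π ^ e ∣ p ^ e ∣ z z̄`, so if `π ∤ z` then `π ^ e ∣ z̄`. -/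
theorem not_dvd_iff_star_pow_dvd {e : ℕ} {z : ℤ[i]} (hz : z.norm = ↑(p ^ e * M)) :
    ¬π ∣ z ↔ star π ^ e ∣ z := by
  constructor
  · intro hπz
    have : π ^ e ∣ z * star z := by
      rw [← Zsqrtd.norm_eq_mul_conj, hz, Nat.cast_mul, Nat.cast_pow, ← hπp, Int.cast_mul,
        Int.cast_pow, Int.cast_natCast, Zsqrtd.norm_eq_mul_conj, mul_pow, mul_assoc]
      exact dvd_mul_right _ _
    simpa only [starRingEnd_apply, star_pow, star_star] using
      map_dvd (starRingEnd ℤ[i]) (hπ.pow_dvd_of_dvd_mul_left e hπz this)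
  · rintro ⟨w, rfl⟩ hπz
    rcases hπ.dvd_or_dvd hπz with h | h
    · exact hπs (hπ.dvd_of_dvd_pow h)
    · refine hpM (Int.natCast_dvd_natCast.mp ?_)
      have hw : w.norm = M := by
        rw [Zsqrtd.norm_mul, Zsqrtd.norm_pow, Zsqrtd.norm_conj, hπp] at hz
        have hp0 : (p : ℤ) ≠ 0 := hπp ▸ norm_eq_zero.not.mpr hπ.ne_zero
        exact mul_left_cancel₀ (pow_ne_zero e hp0) (hz.trans (by push_cast; ring))
      rw [← hw, ← hπp]
      exact map_dvd Zsqrtd.normMonoidHom h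

/-- Split by whether `π ∣ z`; by `not_dvd_iff_star_pow_dvd` the others are the multiples of
`π̄ ^ (e + 1)`. -/
theorem r₂_pow_succ_mul (e : ℕ) : r₂ (p ^ (e + 1) * M) = r₂ (p ^ e * M) + r₂ M := by
  classical
  have hsplit := Nat.card_congr <| Equiv.sumCompl
    fun z : {z : ℤ[i] // z.norm = ↑(p ^ (e + 1) * M)} => π ∣ z.1
  rw [Nat.card_sum] at hsplit
  rw [r₂, ← hsplit, ← card_norm_eq_mul_and_dvd hπp hπ.ne_zero,
    ← card_norm_eq_mul_and_dvd (π := star π ^ (e + 1)) (c := p ^ (e + 1))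
      (by rw [Zsqrtd.norm_pow, Zsqrtd.norm_conj, hπp]; push_cast; rfl)
      (pow_ne_zero _ (star_ne_zero.mpr hπ.ne_zero))]
  congr 1
  · exact Nat.card_congr ((Equiv.subtypeSubtypeEquivSubtypeInter _ _).trans
      (Equiv.subtypeEquivRight fun z => by rw [pow_succ', mul_assoc]))
  · exact Nat.card_congr ((Equiv.subtypeSubtypeEquivSubtypeInter _ _).trans
      (Equiv.subtypeEquivRight fun z => and_congr_right
        (not_dvd_iff_star_pow_dvd hπ hπp hπs hpM)))

theorem r₂_pow_mul_of_not_dvd_star (k : ℕ) : r₂ (p ^ k * M) = (k + 1) * r₂ M := by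
  induction k with
  | zero => simp
  | succ k ih => rw [r₂_pow_succ_mul hπ hπp hπs hpM, ih]; ring

end NotDvdStar

theorem r₂_prime_pow_mul {p M : ℕ} (hp : p.Prime) (hpM : ¬p ∣ M) (k : ℕ) :
    (r₂ (p ^ k * M) : ℤ) = (∑ i ∈ range (k + 1), ZMod.χ₄ p ^ i) * r₂ M := by
  rcases hp.eq_two_or_odd' with rfl | hodd
  · simp [r₂_two_pow_mul]
  rcases Nat.odd_mod_four_iff.mp (Nat.odd_iff.mp hodd) with hp1 | hp3
  · obtain ⟨π, hπp, hπs⟩ := exists_norm_eq_not_dvd_star hp hp1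
    have hπ : Prime π := prime_of_natAbs_norm_prime (by rw [hπp]; exact hp)
    rw [ZMod.χ₄_nat_one_mod_four hp1, r₂_pow_mul_of_not_dvd_star hπ hπp hπs hpM]
    simp
  · rw [ZMod.χ₄_nat_three_mod_four hp3, r₂_pow_mul_of_mod_four_eq_three hp hp3 hpM]

/-- The four rotations of this sector by the units `±1, ±i` tile `ℤ[i] ∖ {0}`. -/
def InSector (z : ℤ[i]) : Prop := 0 < z.re ∧ -z.re < z.im ∧ z.im ≤ z.re

noncomputable def sectorCount (N : ℕ) : ℕ := Nat.card {z : ℤ[i] // InSector z ∧ z.norm = N}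

theorem r₂_eq_four_mul_sectorCount {N : ℕ} (hN : 0 < N) : r₂ N = 4 * sectorCount N := by
  let rot : Fin 4 → ℤ[i] := ![1, ⟨0, 1⟩, -1, ⟨0, -1⟩]
  have hrot : ∀ k, (rot k).norm = 1 := by decide
  let f : Fin 4 × {z : ℤ[i] // InSector z ∧ z.norm = N} → {z : ℤ[i] // z.norm = N} :=
    fun x => ⟨rot x.1 * x.2.1, by rw [Zsqrtd.norm_mul, hrot, one_mul, x.2.2.2]⟩
  have hf : Function.Bijective f := by
    constructor
    · rintro ⟨k, z, hz, -⟩ ⟨l, w, hw, -⟩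
      unfold InSector at hz hw
      fin_cases k <;> fin_cases l <;> simp [f, rot, Zsqrtd.ext_iff] <;> omega
    · rintro ⟨z, hz⟩
      have hz0 : z.re ≠ 0 ∨ z.im ≠ 0 := by
        by_contra! h
        rw [Zsqrtd.norm_def, h.1, h.2] at hz
        omega
      obtain ⟨k, hk⟩ : ∃ k : Fin 4, InSector (rot (-k) * z) := by
        simp [Fin.exists_fin_succ, rot, InSector]
        omega
      have hinv : rot k * rot (-k) = 1 := by fin_cases k <;> decide
      refine ⟨(k, ⟨rot (-k) * z, hk, ?_⟩), Subtype.ext ?_⟩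
      · rw [Zsqrtd.norm_mul, hrot, one_mul, hz]
      · simp only [f, ← mul_assoc, hinv, one_mul]
  rw [sectorCount, r₂, ← Nat.card_congr (Equiv.ofBijective f hf), Nat.card_prod, Nat.card_fin]

theorem sectorCount_zero : sectorCount 0 = 0 :=
  @Nat.card_of_isEmpty _ ⟨fun ⟨z, ⟨hre, _⟩, hz⟩ => by
    rw [Nat.cast_zero, norm_eq_zero] at hz
    simp [hz] at hre⟩

theorem sectorCount_one : sectorCount 1 = 1 := by
  refine Nat.card_eq_one_iff_exists.mpr
    ⟨⟨1, by norm_num [InSector], by decide⟩, fun ⟨z, ⟨hre, him⟩, hz⟩ => ?_⟩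
  rw [Zsqrtd.norm_def, Nat.cast_one] at hz
  have hre1 : z.re = 1 := by nlinarith [mul_self_nonneg z.im]
  have him0 : z.im * z.im = 0 := by rw [hre1] at hz; linarith
  exact Subtype.ext (Zsqrtd.ext hre1 (mul_self_eq_zero.mp him0))

theorem sectorCount_eq_chi4_mul_zeta (N : ℕ) : (sectorCount N : ℤ) = (chi4 * ζ) N := by
  induction N using Nat.recOnPrimePow with
  | zero => simp [sectorCount_zero]
  | one => simp [sectorCount_one]
  | prime_pow_mul M p k hp hpM _ ih =>
    have hM : 0 < M := Nat.pos_of_ne_zero (by rintro rfl; exact hpM (dvd_zero p))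
    have h := r₂_prime_pow_mul hp hpM k
    rw [r₂_eq_four_mul_sectorCount (Nat.mul_pos (pow_pos hp.pos k) hM),
      r₂_eq_four_mul_sectorCount hM] at h
    have hcop : (p ^ k).Coprime M := ((Nat.Prime.coprime_iff_not_dvd hp).mpr hpM).pow_left k
    rw [(isMultiplicative_chi4.mul isMultiplicative_zeta.natCast).map_mul_of_coprime hcop,
      chi4_mul_zeta_prime_pow hp, ← ih]
    push_cast at h
    linarith

def sectorEquiv : (Σ n : ℕ, Icc (-(n : ℤ)) (n + 1)) ≃ {z : ℤ[i] // InSector z} where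
  toFun x := ⟨⟨x.1 + 1, x.2⟩, by
    have := mem_Icc.mp x.2.2
    exact ⟨by dsimp only; omega, by dsimp only; omega, by dsimp only; omega⟩⟩
  invFun z := ⟨(z.1.re - 1).toNat, z.1.im, by
    obtain ⟨h1, h2, h3⟩ := z.2; exact mem_Icc.mpr ⟨by omega, by omega⟩⟩
  left_inv := by
    rintro ⟨n, j, hj⟩
    dsimp only
    exact Sigma.subtype_ext (show (n + 1 - 1 : ℤ).toNat = n by omega) rfl
  right_inv z := Subtype.ext (Zsqrtd.ext (by have := z.2.1; simp; omega) rfl)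

theorem norm_sectorEquiv (x : Σ n : ℕ, Icc (-(n : ℤ)) (n + 1)) :
    (sectorEquiv x).1.norm = ((x.1 + 1) ^ 2 + x.2.1.natAbs ^ 2 : ℕ) := by
  rw [Zsqrtd.norm_def]
  push_cast
  rw [sq_abs]
  dsimp [sectorEquiv]
  ring

end GaussianInt

theorem tsum_sum_Icc_pow_eq_tsum_sectorCount_mul_pow {𝕜 : Type*} [NormedField 𝕜]
    [CompleteSpace 𝕜] {q : 𝕜} (hq : ‖q‖ < 1) :
    ∑' n : ℕ, ∑ j ∈ Icc (-(n : ℤ)) (n + 1), q ^ ((n + 1) ^ 2 + j.natAbs ^ 2) =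
      ∑' N : ℕ, (GaussianInt.sectorCount N : 𝕜) * q ^ N := by
  have hs := summable_pow_sq_add_natAbs_sq hq
  rw [tsum_congr fun n => (Finset.tsum_subtype _ _).symm, ← hs.tsum_sigma,
    tsum_pow_eq_tsum_card_fiber_mul_pow _ q hs]
  refine tsum_congr fun N => ?_
  rw [GaussianInt.sectorCount]
  congr 2
  refine Nat.card_congr ((Equiv.subtypeEquiv GaussianInt.sectorEquiv fun x => ?_).trans
    (Equiv.subtypeSubtypeEquivSubtypeInter _ (fun z : GaussianInt => z.norm = (N : ℤ))))
  rw [Set.mem_preimage, Set.mem_singleton_iff, GaussianInt.norm_sectorEquiv, Nat.cast_inj]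

theorem stmt0 (q : ℂ) (hq : ‖q‖ < 1) :
    ∑' n : ℕ, q ^ (n + 1) / (1 + q ^ (2 * (n + 1))) =
    ∑' n : ℕ, ∑ j ∈ Finset.Icc (-(n : ℤ)) ((n : ℤ) + 1),
      q ^ ((n + 1) ^ 2 + j.natAbs ^ 2) := by
  rw [tsum_pow_div_one_add_pow_eq_tsum_chi4_mul_zeta hq,
    tsum_sum_Icc_pow_eq_tsum_sectorCount_mul_pow hq]
  exact tsum_congr fun N => by
    rw [← GaussianInt.sectorCount_eq_chi4_mul_zeta]; push_cast; rfl
end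

section
/- For |q|<1, $\sum_{n=1}^{\infty}\sum_{m=-n+1}^{n} q^{n^2+m^2} = -\frac{1}{4} + \frac{1}{4}\Big(\sum_{n=-\infty}^{\infty} q^{2n^2}\Big)^2 + q\Big(\sum_{n=0}^{\infty} q^{2n(n+1)}\Big)^2$. -/
/-!
Write `φ(q) = ∑_{n ≥ 0} q^{n²}` and `θ(q) = ∑_{n ∈ ℤ} q^{n²} = 2 φ(q) - 1`. Reflecting the part
`m ≥ 1` of the wedge `-n < m ≤ n` in the diagonal turns it into the quarter plane `a ≥ 1, b ≥ 0`,
so the left-hand side is `(φ(q) - 1) φ(q) = (θ(q)² - 1) / 4`. The theorem is then Jacobi's identity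
`θ(q)² = θ(q²)² + 4 q ψ²` with `ψ = ∑_{n ≥ 0} q^{2n(n+1)}`, obtained by splitting `ℤ²` according to
the parity of `x + y`: the points `(u + v, u - v)` have `x² + y² = 2u² + 2v²`, and the points
`(u + v + 1, u - v)` have `x² + y² = 2u(u+1) + 2v(v+1) + 1`.
-/

open Finset Filter

def intProdParityEquiv : (ℤ × ℤ) ⊕ (ℤ × ℤ) ≃ ℤ × ℤ where
  toFun
    | .inl (u, v) => (u + v, u - v)
    | .inr (u, v) => (u + v + 1, u - v)
  invFun p :=
    if (p.1 + p.2) % 2 = 0 then .inl ((p.1 + p.2) / 2, (p.1 - p.2) / 2)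
    else .inr ((p.1 + p.2 - 1) / 2, (p.1 - p.2 - 1) / 2)
  left_inv := by
    rintro (⟨u, v⟩ | ⟨u, v⟩) <;> dsimp only <;> split_ifs <;>
      first | omega | (simp only [Sum.inl.injEq, Sum.inr.injEq, Prod.mk.injEq]; omega)
  right_inv := by
    rintro ⟨x, y⟩
    dsimp only
    split_ifs <;> simp only [Prod.mk.injEq] <;> omega

theorem tsum_int_prod_split_parity {E : Type*} [AddCommGroup E] [UniformSpace E]
    [IsUniformAddGroup E] [CompleteSpace E] [T2Space E] {f : ℤ × ℤ → E} (hf : Summable f) :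
    ∑' p, f p =
      ∑' p : ℤ × ℤ, f (p.1 + p.2, p.1 - p.2) + ∑' p : ℤ × ℤ, f (p.1 + p.2 + 1, p.1 - p.2) := by
  have hf' := intProdParityEquiv.summable_iff.mpr hf
  rw [← intProdParityEquiv.tsum_eq]
  exact ((hf'.comp_injective Sum.inl_injective).tsum_sum
    (hf'.comp_injective Sum.inr_injective)).trans rfl

lemma natAbs_add_sq_add_natAbs_sub_sq (u v : ℤ) :
    (u + v).natAbs ^ 2 + (u - v).natAbs ^ 2 = 2 * u.natAbs ^ 2 + 2 * v.natAbs ^ 2 := by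
  zify
  simp only [sq_abs]
  ring

lemma natAbs_add_add_one_sq_add_natAbs_sub_sq (u v : ℤ) :
    (u + v + 1).natAbs ^ 2 + (u - v).natAbs ^ 2 =
      2 * u.natAbs * (u + 1).natAbs + 2 * v.natAbs * (v + 1).natAbs + 1 := by
  have h (n : ℤ) : |n| * |n + 1| = n * (n + 1) := by
    rw [← abs_mul, abs_of_nonneg]
    nlinarith [sq_nonneg (2 * n + 1)]
  zify
  simp only [sq_abs, mul_assoc, h]
  ring

/-- `⟨n, m⟩` is the lattice point `(n + 1, m)` of the wedge `-(n + 1) < m ≤ n + 1`. -/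
abbrev Wedge : Type := Σ n : ℕ, {m : ℤ // m ∈ Icc (-(n : ℤ)) (n + 1)}

/-- `(a, b)` is the lattice point `(a + 1, b)` of the quarter plane. -/
def wedgeFold (x : Wedge) : ℕ × ℕ :=
  if 1 ≤ x.2.1 then (x.2.1.natAbs - 1, x.1 + 1) else (x.1, x.2.1.natAbs)

lemma wedgeFold_bijective : Function.Bijective wedgeFold := by
  constructor
  · rintro ⟨n, m, hm⟩ ⟨n', m', hm'⟩ h
    rw [mem_Icc] at hm hm'
    simp only [wedgeFold] at h
    apply Sigma.subtype_ext <;> dsimp only <;> split_ifs at h <;> rw [Prod.mk.injEq] at h <;>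
      omega
  · rintro ⟨a, b⟩
    by_cases h : a < b
    · refine ⟨⟨b - 1, a + 1, mem_Icc.mpr (by omega)⟩, ?_⟩
      dsimp only [wedgeFold]
      rw [if_pos (by omega), Prod.mk.injEq]
      omega
    · refine ⟨⟨a, -b, mem_Icc.mpr (by omega)⟩, ?_⟩
      dsimp only [wedgeFold]
      rw [if_neg (by omega), Prod.mk.injEq]
      omega

noncomputable def wedgeEquiv : Wedge ≃ ℕ × ℕ := .ofBijective wedgeFold wedgeFold_bijective

lemma wedgeEquiv_add_one_sq_add_sq (x : Wedge) :
    ((wedgeEquiv x).1 + 1) ^ 2 + (wedgeEquiv x).2 ^ 2 = (x.1 + 1) ^ 2 + x.2.1.natAbs ^ 2 := by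
  obtain ⟨n, m, hm⟩ := x
  rw [mem_Icc] at hm
  simp only [wedgeEquiv, Equiv.ofBijective_apply, wedgeFold]
  split_ifs with h
  · rw [Nat.sub_add_cancel (by omega), add_comm]
  · rfl

section Series

variable {K : Type*} [NormedField K] {q : K}

lemma summable_norm_pow_of_le (hq : ‖q‖ < 1) {e : ℕ → ℕ} (he : ∀ᶠ n in cofinite, n ≤ e n) :
    Summable fun n => ‖q ^ e n‖ :=
  (summable_geometric_of_lt_one (norm_nonneg q) hq).of_norm_bounded_eventually <| he.mono
    fun n hn => by
      rw [norm_norm, norm_pow]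
      exact pow_le_pow_of_le_one (norm_nonneg q) hq.le hn

lemma summable_norm_pow_of_natAbs_le (hq : ‖q‖ < 1) {e : ℤ → ℕ}
    (he : ∀ᶠ n in cofinite, n.natAbs ≤ e n) : Summable fun n => ‖q ^ e n‖ :=
  summable_int_iff_summable_nat_and_neg.mpr
    ⟨summable_norm_pow_of_le hq <| (Nat.cast_injective.tendsto_cofinite.eventually he).mono
        fun n hn => by simpa using hn,
      summable_norm_pow_of_le hq <|
        ((neg_injective.comp Nat.cast_injective).tendsto_cofinite.eventually he).mono
          fun n hn => by simpa using hn⟩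

variable [CompleteSpace K]

lemma tsum_nat_pow_sq (hq : ‖q‖ < 1) :
    ∑' n : ℕ, q ^ n ^ 2 = 1 + ∑' n : ℕ, q ^ (n + 1) ^ 2 := by
  rw [(summable_norm_pow_of_le hq <| .of_forall fun n => Nat.le_self_pow two_ne_zero n).of_norm
    |>.tsum_eq_zero_add]
  norm_num

lemma tsum_int_pow_natAbs_sq (hq : ‖q‖ < 1) :
    ∑' n : ℤ, q ^ n.natAbs ^ 2 = 1 + 2 * ∑' n : ℕ, q ^ (n + 1) ^ 2 := by
  have hθ := summable_norm_pow_of_natAbs_le hq <|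
    .of_forall fun n => Nat.le_self_pow two_ne_zero n.natAbs
  rw [tsum_int_eq_zero_add_two_mul_tsum_pnat (fun n => by simp) hθ.of_norm,
    tsum_pnat_eq_tsum_succ (f := fun n : ℕ => q ^ (n : ℤ).natAbs ^ 2)]
  simp only [Int.natAbs_zero, Int.natAbs_natCast, nsmul_eq_mul, Nat.cast_ofNat]
  norm_num

lemma tsum_int_pow_two_mul_natAbs_mul (hq : ‖q‖ < 1) :
    ∑' n : ℤ, q ^ (2 * n.natAbs * (n + 1).natAbs) = 2 * ∑' n : ℕ, q ^ (2 * n * (n + 1)) := by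
  have hψ : Summable fun n : ℕ => q ^ (2 * n * (n + 1)) :=
    (summable_norm_pow_of_le hq <| .of_forall fun n => by nlinarith).of_norm
  have hpos (n : ℕ) :
      q ^ (2 * (n : ℤ).natAbs * ((n : ℤ) + 1).natAbs) = q ^ (2 * n * (n + 1)) := by
    rw [show ((n : ℤ) + 1).natAbs = n + 1 by omega, Int.natAbs_natCast]
  have hneg (n : ℕ) :
      q ^ (2 * (-((n : ℤ) + 1)).natAbs * (-((n : ℤ) + 1) + 1).natAbs) =
        q ^ (2 * n * (n + 1)) := by
    rw [show (-((n : ℤ) + 1)).natAbs = n + 1 by omega,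
      show (-((n : ℤ) + 1) + 1).natAbs = n by omega]
    ring
  rw [tsum_of_nat_of_neg_add_one (hψ.congr fun n => (hpos n).symm)
    (hψ.congr fun n => (hneg n).symm), tsum_congr hpos, tsum_congr hneg, two_mul]

theorem sq_tsum_int_pow_natAbs_sq (hq : ‖q‖ < 1) :
    (∑' n : ℤ, q ^ n.natAbs ^ 2) ^ 2 =
      (∑' n : ℤ, q ^ (2 * n.natAbs ^ 2)) ^ 2 +
        4 * q * (∑' n : ℕ, q ^ (2 * n * (n + 1))) ^ 2 := by
  have hθ := summable_norm_pow_of_natAbs_le hq <|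
    .of_forall fun n => Nat.le_self_pow two_ne_zero n.natAbs
  have hθ₂ := summable_norm_pow_of_natAbs_le hq (e := fun n => 2 * n.natAbs ^ 2) <|
    .of_forall fun n => by nlinarith [Nat.le_self_pow two_ne_zero n.natAbs]
  have hψ := summable_norm_pow_of_natAbs_le hq (e := fun n => 2 * n.natAbs * (n + 1).natAbs) <|
    (eventually_cofinite_ne (-1)).mono fun n hn => by
      show n.natAbs ≤ 2 * n.natAbs * (n + 1).natAbs
      have hb : 1 ≤ (n + 1).natAbs := by omega
      generalize n.natAbs = a, (n + 1).natAbs = b at hb ⊢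
      nlinarith
  set f : ℤ × ℤ → K := fun p => q ^ (p.1.natAbs ^ 2 + p.2.natAbs ^ 2)
  have hf : Summable f := by simpa only [f, pow_add] using summable_mul_of_summable_norm hθ hθ
  have hsq : (∑' n : ℤ, q ^ n.natAbs ^ 2) ^ 2 = ∑' p, f p := by
    rw [sq, tsum_mul_tsum_of_summable_norm hθ hθ]
    simp only [f, pow_add]
  have heven :
      ∑' p : ℤ × ℤ, f (p.1 + p.2, p.1 - p.2) = (∑' n : ℤ, q ^ (2 * n.natAbs ^ 2)) ^ 2 := by
    rw [sq, tsum_mul_tsum_of_summable_norm hθ₂ hθ₂]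
    refine tsum_congr fun p => ?_
    rw [← pow_add, ← natAbs_add_sq_add_natAbs_sub_sq]
  have hodd : ∑' p : ℤ × ℤ, f (p.1 + p.2 + 1, p.1 - p.2) =
      q * (∑' n : ℤ, q ^ (2 * n.natAbs * (n + 1).natAbs)) ^ 2 := by
    rw [sq, tsum_mul_tsum_of_summable_norm hψ hψ, ← tsum_mul_left]
    refine tsum_congr fun p => ?_
    rw [← pow_add, mul_comm, ← pow_succ, ← natAbs_add_add_one_sq_add_natAbs_sub_sq]
  rw [hsq, tsum_int_prod_split_parity hf, heven, hodd, tsum_int_pow_two_mul_natAbs_mul hq]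
  ring

lemma tsum_sum_Icc_pow_add_one_sq_add_natAbs_sq (hq : ‖q‖ < 1) :
    ∑' n : ℕ, ∑ m ∈ Icc (-(n : ℤ)) (n + 1), q ^ ((n + 1) ^ 2 + m.natAbs ^ 2) =
      (∑' n : ℕ, q ^ (n + 1) ^ 2) * ∑' n : ℕ, q ^ n ^ 2 := by
  have hA := summable_norm_pow_of_le hq (e := fun n => (n + 1) ^ 2) <|
    .of_forall fun n => by nlinarith
  have hφ := summable_norm_pow_of_le hq <| .of_forall fun n => Nat.le_self_pow two_ne_zero n
  set g : ℕ × ℕ → K := fun p => q ^ ((p.1 + 1) ^ 2 + p.2 ^ 2)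
  have hg : Summable g := by simpa only [g, pow_add] using summable_mul_of_summable_norm hA hφ
  have hgw (x : Wedge) : g (wedgeEquiv x) = q ^ ((x.1 + 1) ^ 2 + x.2.1.natAbs ^ 2) :=
    congrArg (q ^ ·) (wedgeEquiv_add_one_sq_add_sq x)
  calc ∑' n : ℕ, ∑ m ∈ Icc (-(n : ℤ)) (n + 1), q ^ ((n + 1) ^ 2 + m.natAbs ^ 2)
      = ∑' x, g (wedgeEquiv x) := by
        simp only [hgw, ← Finset.tsum_subtype]
        exact ((wedgeEquiv.summable_iff.mpr hg).congr hgw).tsum_sigma.symm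
    _ = ∑' p, g p := wedgeEquiv.tsum_eq g
    _ = (∑' n : ℕ, q ^ (n + 1) ^ 2) * ∑' n : ℕ, q ^ n ^ 2 := by
        rw [tsum_mul_tsum_of_summable_norm hA hφ]
        simp only [g, pow_add]

end Series

theorem stmt2 (q : ℂ) (hq : ‖q‖ < 1) :
    ∑' n : ℕ, ∑ m ∈ Finset.Icc (-(n : ℤ)) ((n : ℤ) + 1),
      q ^ ((n + 1) ^ 2 + m.natAbs ^ 2) =
    -(1 / 4) + (1 / 4) * (∑' n : ℤ, q ^ (2 * n.natAbs ^ 2)) ^ 2 +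
      q * (∑' n : ℕ, q ^ (2 * n * (n + 1))) ^ 2 := by
  have hjacobi := sq_tsum_int_pow_natAbs_sq hq
  rw [tsum_int_pow_natAbs_sq hq] at hjacobi
  rw [tsum_sum_Icc_pow_add_one_sq_add_natAbs_sq hq, tsum_nat_pow_sq hq]
  linear_combination (1 / 4 : ℂ) * hjacobi
end

section
/- For every nonnegative integer $n$, the terminating ${}_3\phi_2$ series ${}_3\phi_2(q^{-2n},q^{2n+2},q; -q^2,q^3; q^2, q^2) = \sum_{k=0}^{n} \frac{(q^{-2n};q^2)_k(q^{2n+2};q^2)_k(q;q^2)_k}{(q^2;q^2)_k(-q^2;q^2)_k(q^3;q^2)_k} q^{2k}$ equals $\frac{(1-q)q^n}{1-q^{2n+1}} \sum_{j=-n}^{n} q^{j^2}$. -/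
/-!
Write `S_n` for the left-hand side and `θ_n = ∑_{|j| ≤ n} q^{j²}`. The q-Zeilberger algorithm
produces a rational certificate `R(n, k)` for which `H(n, k) = R(n, k) t(n, k)` telescopes
against the summands `t(n, k)`, so that
`q^{2n+5} (1 - q^{2n+1}) S_n - q (1 - q^{4n+6}) S_{n+1} + (1 - q^{2n+5}) S_{n+2} = 0`.
Since `θ_{n+1} = θ_n + 2 q^{(n+1)²}`, the right-hand side satisfies the same recurrence, and
both sides agree for `n = 0, 1`.
-/

open Finset

namespace QSeries

section CommRing

variable {R : Type*} [CommRing R]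

/-- The `q`-Pochhammer symbol `(a; p)_k`. -/
def qPochhammer (a p : R) (k : ℕ) : R := ∏ i ∈ range k, (1 - a * p ^ i)

theorem qPochhammer_succ (a p : R) (k : ℕ) :
    qPochhammer a p (k + 1) = qPochhammer a p k * (1 - a * p ^ k) :=
  prod_range_succ _ k

theorem qPochhammer_mul_sub (a p : R) (k : ℕ) :
    qPochhammer a p k * (1 - a * p ^ k) = (1 - a) * qPochhammer (a * p) p k := by
  rw [← qPochhammer_succ, qPochhammer, prod_range_succ', mul_comm]
  simp only [qPochhammer, pow_succ', mul_assoc, pow_zero, mul_one]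

theorem qPochhammer_eq_zero {a p : R} {m k : ℕ} (ha : a * p ^ m = 1) (hmk : m < k) :
    qPochhammer a p k = 0 :=
  prod_eq_zero (mem_range.mpr hmk) (by rw [ha, sub_self])

noncomputable def thetaPartial (q : R) (n : ℕ) : R := ∑ j ∈ Icc (-(n : ℤ)) n, q ^ (j.natAbs ^ 2)

theorem thetaPartial_zero (q : R) : thetaPartial q 0 = 1 := by
  simp [thetaPartial]

theorem thetaPartial_succ (q : R) (n : ℕ) :
    thetaPartial q (n + 1) = thetaPartial q n + 2 * q ^ ((n + 1) ^ 2) := by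
  have hIcc : Icc (-((n + 1 : ℕ) : ℤ)) ((n + 1 : ℕ) : ℤ) =
      insert (-((n + 1 : ℕ) : ℤ)) (insert ((n + 1 : ℕ) : ℤ) (Icc (-(n : ℤ)) n)) := by
    ext x
    simp only [mem_Icc, mem_insert]
    omega
  rw [thetaPartial, thetaPartial, hIcc, sum_insert (by simp; omega), sum_insert (by simp)]
  simp only [Int.natAbs_neg, Int.natAbs_natCast]
  ring

theorem eq_of_linear_recurrence [IsDomain R] {f g : ℕ → R} (α β γ : ℕ → R)
    (hγ : ∀ n, γ n ≠ 0)
    (hf : ∀ n, α n * f n + γ n * f (n + 2) = β n * f (n + 1))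
    (hg : ∀ n, α n * g n + γ n * g (n + 2) = β n * g (n + 1))
    (h0 : f 0 = g 0) (h1 : f 1 = g 1) : f = g := by
  have h : ∀ n, f n = g n ∧ f (n + 1) = g (n + 1) := by
    intro n
    induction n with
    | zero => exact ⟨h0, h1⟩
    | succ n ih =>
      refine ⟨ih.2, mul_left_cancel₀ (hγ n) ?_⟩
      linear_combination hf n - hg n - α n * ih.1 + β n * ih.2
  exact funext fun n => (h n).1

end CommRing

variable {K : Type*} [Field K] {q : K}

theorem pow_ne_neg_one (hq1 : ∀ m : ℕ, 0 < m → q ^ m ≠ 1) {m : ℕ} (hm : 0 < m) : q ^ m ≠ -1 :=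
  fun h => hq1 (2 * m) (by omega) (by rw [pow_mul', h, neg_one_sq])

/-- The `k`-th coefficient of `₃φ₂(a, b, q; -q², q³; q², z)`. -/
def phiCoeff (q a b : K) (k : ℕ) : K :=
  qPochhammer a (q ^ 2) k * qPochhammer b (q ^ 2) k * qPochhammer q (q ^ 2) k /
    (qPochhammer (q ^ 2) (q ^ 2) k * qPochhammer (-q ^ 2) (q ^ 2) k *
      qPochhammer (q ^ 3) (q ^ 2) k)

theorem phiCoeff_comm (q a b : K) (k : ℕ) : phiCoeff q a b k = phiCoeff q b a k := by
  simp only [phiCoeff, mul_comm (qPochhammer a _ k)]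

theorem phiCoeff_mul_sq_left {a : K} (b : K) (k : ℕ) (ha : a ≠ 1) :
    phiCoeff q (a * q ^ 2) b k = phiCoeff q a b k * (1 - a * (q ^ 2) ^ k) / (1 - a) := by
  rw [eq_div_iff (sub_ne_zero.mpr ha.symm), phiCoeff, phiCoeff, div_mul_eq_mul_div,
    div_mul_eq_mul_div]
  congr 1
  linear_combination -(qPochhammer b (q ^ 2) k * qPochhammer q (q ^ 2) k) *
    qPochhammer_mul_sub a (q ^ 2) k

theorem phiCoeff_mul_sq_right (a : K) {b : K} (k : ℕ) (hb : b ≠ 1) :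
    phiCoeff q a (b * q ^ 2) k = phiCoeff q a b k * (1 - b * (q ^ 2) ^ k) / (1 - b) := by
  rw [phiCoeff_comm, phiCoeff_mul_sq_left a k hb, phiCoeff_comm]

theorem phiCoeff_succ (q a b : K) (k : ℕ) :
    phiCoeff q a b (k + 1) = phiCoeff q a b k *
      ((1 - a * (q ^ 2) ^ k) * (1 - b * (q ^ 2) ^ k) * (1 - q * (q ^ 2) ^ k)) /
      ((1 - q ^ 2 * (q ^ 2) ^ k) * (1 + q ^ 2 * (q ^ 2) ^ k) * (1 - q ^ 3 * (q ^ 2) ^ k)) := by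
  simp only [phiCoeff, qPochhammer_succ, neg_mul, sub_neg_eq_add, div_eq_mul_inv, mul_inv]
  ring

theorem phiCoeff_eq_zero {a : K} (b : K) {m k : ℕ} (ha : a * (q ^ 2) ^ m = 1) (hmk : m < k) :
    phiCoeff q a b k = 0 := by
  simp [phiCoeff, qPochhammer_eq_zero ha hmk]

/-- The `k`-th summand of the series of the theorem, with `c` standing for `q^{2n}`. -/
def phiTerm (q c : K) (k : ℕ) : K := phiCoeff q c⁻¹ (q ^ 2 * c) k * (q ^ 2) ^ k

/-- The q-Zeilberger certificate of `phiTerm`. For `c = q^{2n}` its factor `phiCoeff` has first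
parameter `q^{-2n-4}`: it divides the three terms `phiTerm q c`, `phiTerm q (q²c)`,
`phiTerm q (q⁴c)` of the recurrence, and vanishes from `k = n + 3` on, as they all do. -/
def phiCertificate (q c : K) (k : ℕ) : K :=
  q ^ 4 * c * (1 - q ^ 6 * c ^ 2) / ((q ^ 2 * c - 1) * (q ^ 4 * c - 1)) *
    ((1 - (q ^ 2) ^ k) * (1 + (q ^ 2) ^ k) * (q * (q ^ 2) ^ k - 1)) *
    phiCoeff q (q ^ 4 * c)⁻¹ (q ^ 2 * c) k

theorem phiCertificate_zero (q c : K) : phiCertificate q c 0 = 0 := by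
  simp [phiCertificate]

theorem phiCertificate_eq_zero (hq : q ≠ 0) (n : ℕ) :
    phiCertificate q ((q ^ 2) ^ n) (n + 3) = 0 := by
  have h : (q ^ 4 * (q ^ 2) ^ n)⁻¹ * (q ^ 2) ^ (n + 2) = 1 := by
    field_simp
    ring
  rw [phiCertificate, phiCoeff_eq_zero _ h (by omega), mul_zero]

theorem phiTerm_recurrence {c : K} (k : ℕ) (hq : q ≠ 0) (hc : c ≠ 0) (hc2 : q ^ 2 * c ≠ 1)
    (hc4 : q ^ 4 * c ≠ 1) (hk2 : q ^ 2 * (q ^ 2) ^ k ≠ 1) (hk2' : q ^ 2 * (q ^ 2) ^ k ≠ -1)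
    (hk3 : q ^ 3 * (q ^ 2) ^ k ≠ 1) :
    q ^ 5 * c * (1 - q * c) * phiTerm q c k - q * (1 - q ^ 6 * c ^ 2) * phiTerm q (q ^ 2 * c) k +
        (1 - q ^ 5 * c) * phiTerm q (q ^ 4 * c) k =
      phiCertificate q c (k + 1) - phiCertificate q c k := by
  have ha1 : (q ^ 4 * c)⁻¹ ≠ 1 := fun h => hc4 (inv_eq_one.mp h)
  have ha2 : (q ^ 4 * c)⁻¹ * q ^ 2 ≠ 1 := fun h => hc2 (by field_simp at h; exact h.symm)
  have hb2 : q ^ 2 * c * q ^ 2 ≠ 1 := by convert hc4 using 1; ring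
  have e0 : c⁻¹ = (q ^ 4 * c)⁻¹ * q ^ 2 * q ^ 2 := by field_simp
  have e1 : (q ^ 2 * c)⁻¹ = (q ^ 4 * c)⁻¹ * q ^ 2 := by field_simp
  have e2 : q ^ 2 * (q ^ 2 * c) = q ^ 2 * c * q ^ 2 := by ring
  have e3 : q ^ 2 * (q ^ 4 * c) = q ^ 2 * c * q ^ 2 * q ^ 2 := by ring
  unfold phiTerm phiCertificate
  rw [e0, e1, e2, e3, phiCoeff_mul_sq_left _ _ ha2, phiCoeff_mul_sq_left _ _ ha1,
    phiCoeff_mul_sq_left _ _ ha1, phiCoeff_mul_sq_right _ _ hc2, phiCoeff_mul_sq_right _ _ hb2,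
    phiCoeff_mul_sq_right _ _ hc2, phiCoeff_succ, pow_succ (q ^ 2) k]
  generalize phiCoeff q (q ^ 4 * c)⁻¹ (q ^ 2 * c) k = T
  generalize (q ^ 2) ^ k = U at *
  have h1 : 1 - q ^ 2 * U ≠ 0 := sub_ne_zero.mpr hk2.symm
  have h2 : 1 + q ^ 2 * U ≠ 0 := fun h => hk2' (by linear_combination h)
  have h3 : 1 - q ^ 3 * U ≠ 0 := sub_ne_zero.mpr hk3.symm
  have h4 : 1 - (q ^ 4 * c)⁻¹ ≠ 0 := sub_ne_zero.mpr ha1.symm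
  have h5 : 1 - (q ^ 4 * c)⁻¹ * q ^ 2 ≠ 0 := sub_ne_zero.mpr ha2.symm
  have h6 : 1 - q ^ 2 * c ≠ 0 := sub_ne_zero.mpr hc2.symm
  have h7 : 1 - q ^ 2 * c * q ^ 2 ≠ 0 := sub_ne_zero.mpr hb2.symm
  have h8 : q ^ 2 * c - 1 ≠ 0 := sub_ne_zero.mpr hc2
  have h9 : q ^ 4 * c - 1 ≠ 0 := sub_ne_zero.mpr hc4
  field_simp
  ring

def phiSum (q : K) (n : ℕ) : K := ∑ k ∈ range (n + 1), phiTerm q ((q ^ 2) ^ n) k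

theorem phiTerm_eq_zero (hq : q ≠ 0) {n k : ℕ} (hnk : n < k) : phiTerm q ((q ^ 2) ^ n) k = 0 := by
  rw [phiTerm, phiCoeff_eq_zero _ (inv_mul_cancel₀ (pow_ne_zero n (pow_ne_zero 2 hq))) hnk,
    zero_mul]

theorem sum_range_phiTerm_eq_phiSum (hq : q ≠ 0) {n N : ℕ} (hnN : n < N) :
    ∑ k ∈ range N, phiTerm q ((q ^ 2) ^ n) k = phiSum q n :=
  (sum_subset (range_subset_range.mpr hnN) fun _ _ hk =>
    phiTerm_eq_zero hq (by simpa using hk)).symm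

theorem phiSum_recurrence (hq : q ≠ 0) (hq1 : ∀ m : ℕ, 0 < m → q ^ m ≠ 1) (n : ℕ) :
    q ^ 5 * (q ^ 2) ^ n * (1 - q * (q ^ 2) ^ n) * phiSum q n
      + (1 - q ^ 5 * (q ^ 2) ^ n) * phiSum q (n + 2)
      = q * (1 - q ^ 6 * ((q ^ 2) ^ n) ^ 2) * phiSum q (n + 1) := by
  have hne : ∀ a b : ℕ, 0 < a → q ^ a * (q ^ 2) ^ b ≠ 1 := fun a b ha => by
    rw [← pow_mul, ← pow_add]; exact hq1 _ (by omega)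
  have hne' : ∀ b : ℕ, q ^ 2 * (q ^ 2) ^ b ≠ -1 := fun b => by
    rw [← pow_mul, ← pow_add]; exact pow_ne_neg_one hq1 (by omega)
  have htel := sum_range_sub (phiCertificate q ((q ^ 2) ^ n)) (n + 3)
  rw [phiCertificate_eq_zero hq, phiCertificate_zero, sub_zero] at htel
  rw [← sub_eq_zero, ← sum_range_phiTerm_eq_phiSum hq (by omega : n < n + 3),
    ← sum_range_phiTerm_eq_phiSum hq (by omega : n + 1 < n + 3),
    ← sum_range_phiTerm_eq_phiSum hq (by omega : n + 2 < n + 3), mul_sum, mul_sum, mul_sum,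
    ← sum_add_distrib, ← sum_sub_distrib, ← htel]
  refine sum_congr rfl fun k _ => ?_
  rw [show (q ^ 2) ^ (n + 1) = q ^ 2 * (q ^ 2) ^ n by ring,
    show (q ^ 2) ^ (n + 2) = q ^ 4 * (q ^ 2) ^ n by ring]
  linear_combination phiTerm_recurrence k hq (pow_ne_zero _ (pow_ne_zero _ hq))
    (hne 2 n two_pos) (hne 4 n (by omega)) (hne 2 k two_pos) (hne' k) (hne 3 k (by omega))

noncomputable def closedForm (q : K) (n : ℕ) : K :=
  (1 - q) * q ^ n / (1 - q ^ (2 * n + 1)) * thetaPartial q n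

theorem closedForm_recurrence (hq1 : ∀ m : ℕ, 0 < m → q ^ m ≠ 1) (n : ℕ) :
    q ^ 5 * (q ^ 2) ^ n * (1 - q * (q ^ 2) ^ n) * closedForm q n
      + (1 - q ^ 5 * (q ^ 2) ^ n) * closedForm q (n + 2)
      = q * (1 - q ^ 6 * ((q ^ 2) ^ n) ^ 2) * closedForm q (n + 1) := by
  have hne : ∀ m, 0 < m → 1 - q ^ m ≠ 0 := fun m hm => sub_ne_zero.mpr (hq1 m hm).symm
  have h0 := hne (2 * n + 1) (by omega)
  have h1 := hne (2 * (n + 1) + 1) (by omega)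
  have h2 := hne (2 * (n + 2) + 1) (by omega)
  simp only [closedForm, thetaPartial_succ]
  field_simp
  ring

theorem phiSum_zero (hq1 : ∀ m : ℕ, 0 < m → q ^ m ≠ 1) : phiSum q 0 = closedForm q 0 := by
  have h : 1 - q ≠ 0 := sub_ne_zero.mpr (pow_one q ▸ hq1 1 one_pos).symm
  simp [phiSum, closedForm, thetaPartial_zero, phiTerm, phiCoeff, qPochhammer, h]

theorem phiSum_one (hq : q ≠ 0) (hq1 : ∀ m : ℕ, 0 < m → q ^ m ≠ 1) :
    phiSum q 1 = closedForm q 1 := by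
  have hne : ∀ m, 0 < m → 1 - q ^ m ≠ 0 := fun m hm => sub_ne_zero.mpr (hq1 m hm).symm
  have h1 := hne 1 one_pos
  have h2 := hne 2 two_pos
  have h3 := hne 3 (by omega)
  have h2' : 1 + q ^ 2 ≠ 0 := fun h => pow_ne_neg_one hq1 two_pos (by linear_combination h)
  simp only [phiSum, closedForm, thetaPartial_succ, thetaPartial_zero, sum_range_succ,
    sum_range_zero, phiTerm, phiCoeff, qPochhammer, prod_range_succ, prod_range_zero]
  norm_num
  field_simp
  ring

theorem phiSum_eq_closedForm (hq : q ≠ 0) (hq1 : ∀ m : ℕ, 0 < m → q ^ m ≠ 1) :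
    phiSum q = closedForm q :=
  eq_of_linear_recurrence _ _ _
    (fun n => sub_ne_zero.mpr (by rw [← pow_mul, ← pow_add]; exact (hq1 _ (by omega)).symm))
    (phiSum_recurrence hq hq1) (closedForm_recurrence hq1) (phiSum_zero hq1) (phiSum_one hq hq1)

end QSeries

open QSeries in
/-- Terminating `₃φ₂(q^{-2n}, q^{2n+2}, q; -q², q³; q², q²)` equals
`(1-q) qⁿ / (1-q^{2n+1}) ∑_{j=-n}^n q^{j²}`. -/
theorem stmt8 (q : ℂ) (n : ℕ) (hq : q ≠ 0)
    (hq1 : ∀ m : ℕ, 0 < m → q ^ m ≠ 1) :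
    ∑ k ∈ Finset.range (n + 1),
      ((∏ i ∈ Finset.range k, (1 - q ^ (-(2 * n : ℤ)) * q ^ (2 * i))) *
       (∏ i ∈ Finset.range k, (1 - q ^ (2 * n + 2) * q ^ (2 * i))) *
       (∏ i ∈ Finset.range k, (1 - q * q ^ (2 * i)))) /
      ((∏ i ∈ Finset.range k, (1 - q ^ 2 * q ^ (2 * i))) *
       (∏ i ∈ Finset.range k, (1 + q ^ 2 * q ^ (2 * i))) *
       (∏ i ∈ Finset.range k, (1 - q ^ 3 * q ^ (2 * i)))) * q ^ (2 * k) =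
    (1 - q) * q ^ n / (1 - q ^ (2 * n + 1)) *
      ∑ j ∈ Finset.Icc (-(n : ℤ)) (n : ℤ), q ^ (j.natAbs ^ 2) := by
  have hzpow : q ^ (-(2 * n : ℤ)) = (q ^ (2 * n))⁻¹ := by
    rw [zpow_neg]
    norm_cast
  rw [hzpow, show q ^ (2 * n + 2) = q ^ 2 * q ^ (2 * n) by ring]
  simp only [pow_mul]
  convert congrFun (phiSum_eq_closedForm hq hq1) n using 1
  · simp only [phiSum, phiTerm, phiCoeff, qPochhammer, neg_mul, sub_neg_eq_add]
  · rfl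
end

section
/- For |q|<1, $\sum_{n=0}^{\infty} \frac{(-1)^n q^{n(n+1)/2}}{(-q;q)_n} = \sum_{n=0}^{\infty} \sum_{j=-n}^{n+1} (-1)^{n+j} (1+q^{n+1}) q^{n(n+1)/2 + j^2}$. -/
open Finset Filter Topology

/-!
Write `G a b = ∑ₙ (-1)ⁿ q^(n(n+1)/2 + a n) / (-q^(b+1); q)ₙ`, so that the left side is `G 0 0`.
Shifting the summation index, and splitting off the last factor of the Pochhammer symbol, give
two linear relations between the `G a b`. Eliminating `G (2b+1) b` from them yields
`G (2b) b = 1 - q^(2b+1) + q^(3b+2) G (2b+2) (b+1)`, and iterating this from `G 0 0` expands it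
into Rogers' false theta series `∑_b q^(b(3b+1)/2) (1 - q^(2b+1))`; the remainders are
`O(|q|^N)` because `|G a b|` is bounded uniformly in `a` and `b`.

On the right, the inner sum is `(-1)ⁿ q^(n(n+1)/2) (1 + q^(n+1)) θₙ` with the partial theta sum
`θₙ = ∑_{j=-n}^{n+1} (-1)^j q^(j²)`. Since `θₙ₊₁ - θₙ = (-1)^(n+1) (q^((n+1)²) - q^((n+2)²))`,
Abel summation turns its partial sums into those of the same false theta series, up to the
boundary term `± q^((N+1)(N+2)/2) θ_N`, which tends to `0`.
-/

namespace RogersFalseTheta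

lemma tri_succ (n : ℕ) : (n + 1) * (n + 1 + 1) / 2 = n * (n + 1) / 2 + (n + 1) := by
  have := (Nat.even_mul_succ_self n).two_dvd
  have h : (n + 1) * (n + 1 + 1) = n * (n + 1) + 2 * (n + 1) := by ring
  omega

lemma le_tri (n : ℕ) : n ≤ n * (n + 1) / 2 := by
  have := (Nat.even_mul_succ_self n).two_dvd
  have h : n * (n + 1) = n * n + n := by ring
  have : n ≤ n * n := Nat.le_mul_self n
  omega

lemma summable_pow_tri_div_pow {r : ℝ} (hr0 : 0 ≤ r) (hr : r < 1) :
    Summable fun n : ℕ => r ^ (n * (n + 1) / 2) / (1 - r) ^ n := by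
  have h1r : 0 < 1 - r := by linarith
  refine summable_of_ratio_norm_eventually_le (r := 1 / 2) (by norm_num) ?_
  have hsmall : ∀ᶠ n : ℕ in atTop, r ^ n < (1 - r) / 2 :=
    (tendsto_pow_atTop_nhds_zero_of_lt_one hr0 hr).eventually_lt_const (by linarith)
  filter_upwards [hsmall] with n hn
  have hstep : r ^ ((n + 1) * (n + 1 + 1) / 2) / (1 - r) ^ (n + 1) =
      r ^ (n * (n + 1) / 2) / (1 - r) ^ n * (r ^ (n + 1) / (1 - r)) := by
    rw [tri_succ, pow_add, pow_succ (1 - r)]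
    field_simp
  have hratio : r ^ (n + 1) / (1 - r) ≤ 1 / 2 := by
    rw [div_le_iff₀ h1r]
    linarith [pow_le_pow_of_le_one hr0 hr.le (Nat.le_add_right n 1)]
  rw [Real.norm_of_nonneg (by positivity), Real.norm_of_nonneg (by positivity), hstep,
    mul_comm (1 / 2 : ℝ)]
  exact mul_le_mul_of_nonneg_left hratio (by positivity)

lemma summable_succ_mul_pow {r : ℝ} (hr0 : 0 ≤ r) (hr : r < 1) :
    Summable fun n : ℕ => ((n : ℝ) + 1) * r ^ n := by
  have h := (summable_pow_mul_geometric_of_norm_lt_one 1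
    (by rwa [Real.norm_of_nonneg hr0] : ‖r‖ < 1)).add (summable_geometric_of_lt_one hr0 hr)
  simpa [add_mul] using h

noncomputable section

variable {𝕜 : Type*} [NormedField 𝕜] {q : 𝕜}

lemma norm_pow_le_pow_of_le (hq : ‖q‖ ≤ 1) {m n : ℕ} (h : m ≤ n) : ‖q ^ n‖ ≤ ‖q‖ ^ m := by
  rw [norm_pow]
  exact pow_le_pow_of_le_one (norm_nonneg q) hq h

lemma norm_pow_le_one (hq : ‖q‖ ≤ 1) (n : ℕ) : ‖q ^ n‖ ≤ 1 := by
  rw [norm_pow]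
  exact pow_le_one₀ (norm_nonneg q) hq

lemma one_sub_norm_le_norm_one_add_pow (hq : ‖q‖ ≤ 1) {m : ℕ} (hm : m ≠ 0) :
    1 - ‖q‖ ≤ ‖1 + q ^ m‖ := by
  have := norm_sub_norm_le (1 : 𝕜) (-q ^ m)
  rw [norm_one, norm_neg, sub_neg_eq_add] at this
  linarith [norm_pow_le_pow_of_le hq (Nat.one_le_iff_ne_zero.mpr hm), pow_one ‖q‖]


lemma one_add_pow_ne_zero (hq : ‖q‖ < 1) {m : ℕ} (hm : m ≠ 0) : 1 + q ^ m ≠ 0 :=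
  norm_pos_iff.mp <| (sub_pos.mpr hq).trans_le (one_sub_norm_le_norm_one_add_pow hq.le hm)

/-- `negQPoch q b n` is the q-Pochhammer symbol `(-q^(b+1); q)_n`. -/
def negQPoch (q : 𝕜) (b n : ℕ) : 𝕜 := ∏ i ∈ range n, (1 + q ^ (i + b + 1))

lemma negQPoch_succ (b n : ℕ) :
    negQPoch q b (n + 1) = negQPoch q b n * (1 + q ^ (n + b + 1)) :=
  prod_range_succ _ n

lemma negQPoch_succ' (b n : ℕ) :
    negQPoch q b (n + 1) = (1 + q ^ (b + 1)) * negQPoch q (b + 1) n := by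
  rw [negQPoch, prod_range_succ', mul_comm, negQPoch]
  simp only [zero_add, add_right_comm _ 1 b, add_assoc]

lemma pow_le_norm_negQPoch (hq : ‖q‖ ≤ 1) (b n : ℕ) :
    (1 - ‖q‖) ^ n ≤ ‖negQPoch q b n‖ := by
  rw [negQPoch, norm_prod]
  calc (1 - ‖q‖) ^ n = ∏ _i ∈ range n, (1 - ‖q‖) := by rw [prod_const, card_range]
    _ ≤ _ := prod_le_prod (fun _ _ => by linarith) fun i _ =>
    one_sub_norm_le_norm_one_add_pow hq (Nat.succ_ne_zero _)

lemma negQPoch_ne_zero (hq : ‖q‖ < 1) (b n : ℕ) : negQPoch q b n ≠ 0 :=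
  norm_pos_iff.mp <| (pow_pos (by linarith) n).trans_le (pow_le_norm_negQPoch hq.le b n)

def gTerm (q : 𝕜) (a b n : ℕ) : 𝕜 := (-1) ^ n * q ^ (n * (n + 1) / 2 + a * n) / negQPoch q b n

def gSeries (q : 𝕜) (a b : ℕ) : 𝕜 := ∑' n, gTerm q a b n

lemma norm_gTerm_le (hq : ‖q‖ < 1) (a b n : ℕ) :
    ‖gTerm q a b n‖ ≤ ‖q‖ ^ (n * (n + 1) / 2) / (1 - ‖q‖) ^ n := by
  rw [gTerm, norm_div, norm_mul, norm_pow, norm_neg, norm_one, one_pow, one_mul]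
  exact div_le_div₀ (by positivity) (norm_pow_le_pow_of_le hq.le (Nat.le_add_right _ _))
    (pow_pos (sub_pos.mpr hq) n) (pow_le_norm_negQPoch hq.le b n)

lemma summable_gTerm [CompleteSpace 𝕜] (hq : ‖q‖ < 1) (a b : ℕ) : Summable (gTerm q a b) :=
  (summable_pow_tri_div_pow (norm_nonneg q) hq).of_norm_bounded (norm_gTerm_le hq a b)

lemma norm_gSeries_le (hq : ‖q‖ < 1) (a b : ℕ) :
    ‖gSeries q a b‖ ≤ ∑' n : ℕ, ‖q‖ ^ (n * (n + 1) / 2) / (1 - ‖q‖) ^ n :=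
  tsum_of_norm_bounded (summable_pow_tri_div_pow (norm_nonneg q) hq).hasSum (norm_gTerm_le hq a b)

lemma one_add_pow_mul_gTerm_succ (hq : ‖q‖ < 1) (a b n : ℕ) :
    (1 + q ^ (b + 1)) * gTerm q a b (n + 1) = -(q ^ (a + 1) * gTerm q (a + 1) (b + 1) n) := by
  have h₁ := one_add_pow_ne_zero hq b.add_one_ne_zero
  have h₂ := negQPoch_ne_zero hq (b + 1) n
  rw [gTerm, gTerm, negQPoch_succ', tri_succ]
  field_simp
  ring

lemma gTerm_add_pow_mul_gTerm (hq : ‖q‖ < 1) (a b n : ℕ) :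
    gTerm q a (b + 1) n + q ^ (b + 1) * gTerm q (a + 1) (b + 1) n =
      (1 + q ^ (b + 1)) * gTerm q a b n := by
  have hP := (negQPoch_succ' (q := q) b n).symm.trans (negQPoch_succ b n)
  have h₂ := negQPoch_ne_zero hq (b + 1) n
  have h₃ := negQPoch_ne_zero hq b n
  rw [gTerm, gTerm, gTerm]
  field_simp
  linear_combination -q ^ (n * (n + 1) / 2 + a * n) * hP

lemma one_add_pow_mul_gSeries [CompleteSpace 𝕜] (hq : ‖q‖ < 1) (a b : ℕ) :
    (1 + q ^ (b + 1)) * gSeries q a b =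
      1 + q ^ (b + 1) - q ^ (a + 1) * gSeries q (a + 1) (b + 1) := by
  have hsum := summable_gTerm hq a b
  have hterm0 : gTerm q a b 0 = 1 := by simp [gTerm, negQPoch]
  rw [gSeries, hsum.tsum_eq_zero_add, hterm0, mul_add, mul_one, ← tsum_mul_left,
    tsum_congr (one_add_pow_mul_gTerm_succ hq a b), tsum_neg, tsum_mul_left, gSeries,
    sub_eq_add_neg]

lemma gSeries_add_pow_mul_gSeries [CompleteSpace 𝕜] (hq : ‖q‖ < 1) (a b : ℕ) :
    gSeries q a (b + 1) + q ^ (b + 1) * gSeries q (a + 1) (b + 1) =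
      (1 + q ^ (b + 1)) * gSeries q a b := by
  rw [gSeries, gSeries, gSeries, ← tsum_mul_left, ← tsum_mul_left,
    ← (summable_gTerm hq a (b + 1)).tsum_add ((summable_gTerm hq (a + 1) (b + 1)).mul_left _)]
  exact tsum_congr (gTerm_add_pow_mul_gTerm hq a b)

lemma gSeries_two_mul_self [CompleteSpace 𝕜] (hq : ‖q‖ < 1) (b : ℕ) :
    gSeries q (2 * b) b =
      1 - q ^ (2 * b + 1) + q ^ (3 * b + 2) * gSeries q (2 * b + 2) (b + 1) := by
  have hA₀ := one_add_pow_mul_gSeries hq (2 * b) b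
  have hA₁ := one_add_pow_mul_gSeries hq (2 * b + 1) b
  have hB := gSeries_add_pow_mul_gSeries hq (2 * b + 1) b
  rw [show 2 * b + 1 + 1 = 2 * b + 2 by ring] at hA₁ hB
  refine mul_left_cancel₀ (one_add_pow_ne_zero hq b.add_one_ne_zero) ?_
  linear_combination hA₀ - q ^ (2 * b + 1) * hB - q ^ (2 * b + 1) * hA₁

/-- `q^(b(3b+1)/2) (1 - q^(2b+1))`, the `b`-th term of Rogers' false theta series. -/
def falseThetaTerm (q : 𝕜) (b : ℕ) : 𝕜 := q ^ (b * (b + 1) / 2) * (q ^ (b ^ 2) - q ^ ((b + 1) ^ 2))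

lemma gSeries_zero_zero_eq_sum_add [CompleteSpace 𝕜] (hq : ‖q‖ < 1) (N : ℕ) :
    gSeries q 0 0 = ∑ b ∈ range N, falseThetaTerm q b +
      q ^ (N * (N + 1) / 2 + N ^ 2) * gSeries q (2 * N) N := by
  induction N with
  | zero => simp
  | succ N ih =>
    rw [ih, gSeries_two_mul_self hq, sum_range_succ, falseThetaTerm, tri_succ, mul_add 2 N 1]
    ring

lemma summable_falseThetaTerm [CompleteSpace 𝕜] (hq : ‖q‖ < 1) : Summable (falseThetaTerm q) := by
  refine ((summable_geometric_of_lt_one (norm_nonneg q) hq).mul_left 2).of_norm_bounded fun b => ?_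
  have h₁ := norm_pow_le_pow_of_le hq.le (le_tri b)
  have h₂ := norm_pow_le_one hq.le (b ^ 2)
  have h₃ := norm_pow_le_one hq.le ((b + 1) ^ 2)
  rw [falseThetaTerm, norm_mul]
  calc _ ≤ ‖q‖ ^ b * 2 := mul_le_mul h₁ ((norm_sub_le _ _).trans (by linarith)) (norm_nonneg _)
        (by positivity)
    _ = 2 * ‖q‖ ^ b := mul_comm _ _

theorem hasSum_falseThetaTerm [CompleteSpace 𝕜] (hq : ‖q‖ < 1) :
    HasSum (falseThetaTerm q) (gSeries q 0 0) := by
  refine (summable_falseThetaTerm hq).hasSum_iff_tendsto_nat.mpr ?_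
  set M := ∑' n : ℕ, ‖q‖ ^ (n * (n + 1) / 2) / (1 - ‖q‖) ^ n
  have hrem : Tendsto (fun N => q ^ (N * (N + 1) / 2 + N ^ 2) * gSeries q (2 * N) N)
      atTop (𝓝 0) := by
    refine squeeze_zero_norm (a := fun N => ‖q‖ ^ N * M) (fun N => ?_) ?_
    · rw [norm_mul]
      exact mul_le_mul (norm_pow_le_pow_of_le hq.le ((le_tri N).trans (Nat.le_add_right _ _)))
        (norm_gSeries_le hq _ _) (norm_nonneg _) (by positivity)
    · simpa using (tendsto_pow_atTop_nhds_zero_of_lt_one (norm_nonneg q) hq).mul_const M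
  have hsums : (fun N => ∑ b ∈ range N, falseThetaTerm q b) =
      fun N => gSeries q 0 0 - q ^ (N * (N + 1) / 2 + N ^ 2) * gSeries q (2 * N) N := by
    ext N
    rw [gSeries_zero_zero_eq_sum_add hq N, add_sub_cancel_right]
  rw [hsums]
  simpa using tendsto_const_nhds.sub hrem

def thetaPartial (q : 𝕜) (N : ℕ) : 𝕜 :=
  ∑ j ∈ Icc (-(N : ℤ)) (N + 1), (-1) ^ j.natAbs * q ^ (j.natAbs ^ 2)

lemma thetaPartial_zero : thetaPartial q 0 = 1 - q := by
  rw [thetaPartial, show Icc (-((0 : ℕ) : ℤ)) ((0 : ℕ) + 1) = {0, 1} by decide]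
  simp [sub_eq_add_neg]

lemma thetaPartial_succ (N : ℕ) :
    thetaPartial q (N + 1) =
      thetaPartial q N + (-1) ^ (N + 1) * (q ^ ((N + 1) ^ 2) - q ^ ((N + 1 + 1) ^ 2)) := by
  have hIcc : Icc (-((N + 1 : ℕ) : ℤ)) ((N + 1 : ℕ) + 1) =
      insert (-((N + 1 : ℕ) : ℤ)) (insert ((N + 1 + 1 : ℕ) : ℤ) (Icc (-(N : ℤ)) (N + 1))) := by
    ext j
    simp only [mem_Icc, mem_insert]
    omega
  rw [thetaPartial, hIcc, sum_insert (by simp only [mem_insert, mem_Icc]; omega),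
    sum_insert (by simp only [mem_Icc]; omega), Int.natAbs_neg, Int.natAbs_natCast,
    Int.natAbs_natCast, thetaPartial, pow_succ]
  ring

lemma norm_thetaPartial_le (hq : ‖q‖ ≤ 1) (N : ℕ) : ‖thetaPartial q N‖ ≤ 2 * ((N : ℝ) + 1) := by
  calc ‖thetaPartial q N‖ ≤ ∑ _j ∈ Icc (-(N : ℤ)) (N + 1), (1 : ℝ) := by
        refine norm_sum_le_of_le _ fun j _ => ?_
        rw [norm_mul, norm_pow, norm_neg, norm_one, one_pow, one_mul]
        exact norm_pow_le_one hq _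
    _ = 2 * ((N : ℝ) + 1) := by
        rw [sum_const, Int.card_Icc, nsmul_one, show (N : ℤ) + 1 + 1 - -N = ((2 * N + 2 : ℕ) : ℤ) by
          push_cast; ring, Int.toNat_natCast]
        push_cast
        ring

def thetaPartialTerm (q : 𝕜) (n : ℕ) : 𝕜 :=
  (-1) ^ n * q ^ (n * (n + 1) / 2) * (1 + q ^ (n + 1)) * thetaPartial q n

lemma sum_Icc_eq_thetaPartialTerm (n : ℕ) :
    ∑ j ∈ Icc (-(n : ℤ)) ((n : ℤ) + 1),
      (-1 : 𝕜) ^ (n + j.natAbs) * (1 + q ^ (n + 1)) * q ^ (n * (n + 1) / 2 + j.natAbs ^ 2) =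
      thetaPartialTerm q n := by
  rw [thetaPartialTerm, thetaPartial, mul_sum]
  refine sum_congr rfl fun j _ => ?_
  rw [pow_add, pow_add]
  ring

lemma sum_range_thetaPartialTerm (N : ℕ) :
    ∑ n ∈ range (N + 1), thetaPartialTerm q n = ∑ b ∈ range (N + 1), falseThetaTerm q b +
      (-1) ^ N * q ^ ((N + 1) * (N + 1 + 1) / 2) * thetaPartial q N := by
  induction N with
  | zero => simp [thetaPartialTerm, falseThetaTerm, thetaPartial_zero]; ring
  | succ N ih =>
    have hsign : ((-1 : 𝕜) ^ N) ^ 2 = 1 := by rw [← pow_mul, mul_comm, pow_mul]; norm_num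
    rw [sum_range_succ, ih, sum_range_succ _ (N + 1), thetaPartialTerm, falseThetaTerm,
      thetaPartial_succ, tri_succ (N + 1)]
    linear_combination
      q ^ ((N + 1) * (N + 1 + 1) / 2) * (q ^ ((N + 1) ^ 2) - q ^ ((N + 1 + 1) ^ 2)) * hsign

lemma norm_thetaPartialTerm_le (hq : ‖q‖ < 1) (n : ℕ) :
    ‖thetaPartialTerm q n‖ ≤ 4 * (((n : ℝ) + 1) * ‖q‖ ^ n) := by
  have h₁ : ‖1 + q ^ (n + 1)‖ ≤ 2 := by
    linarith [norm_add_le (1 : 𝕜) (q ^ (n + 1)), norm_one (α := 𝕜), norm_pow_le_one hq.le (n + 1)]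
  rw [thetaPartialTerm, norm_mul, norm_mul, norm_mul, norm_pow, norm_neg, norm_one, one_pow,
    one_mul]
  calc _ ≤ ‖q‖ ^ n * 2 * (2 * ((n : ℝ) + 1)) := by
        gcongr
        · exact norm_pow_le_pow_of_le hq.le (le_tri n)
        · exact norm_thetaPartial_le hq.le n
    _ = _ := by ring

lemma summable_thetaPartialTerm [CompleteSpace 𝕜] (hq : ‖q‖ < 1) :
    Summable (thetaPartialTerm q) :=
  ((summable_succ_mul_pow (norm_nonneg q) hq).mul_left 4).of_norm_bounded
    (norm_thetaPartialTerm_le hq)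

theorem hasSum_thetaPartialTerm [CompleteSpace 𝕜] (hq : ‖q‖ < 1) :
    HasSum (thetaPartialTerm q) (gSeries q 0 0) := by
  refine (summable_thetaPartialTerm hq).hasSum_iff_tendsto_nat.mpr ?_
  refine (tendsto_add_atTop_iff_nat 1).mp ?_
  have hmain := (hasSum_falseThetaTerm hq).tendsto_sum_nat.comp (tendsto_add_atTop_nat 1)
  have htail : Tendsto (fun N => (-1) ^ N * q ^ ((N + 1) * (N + 1 + 1) / 2) * thetaPartial q N)
      atTop (𝓝 0) := by
    refine squeeze_zero_norm (fun N => ?_)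
      (((summable_succ_mul_pow (norm_nonneg q) hq).mul_left 2).tendsto_atTop_zero)
    calc _ ≤ ‖q‖ ^ N * (2 * ((N : ℝ) + 1)) := by
          rw [norm_mul, norm_mul, norm_pow, norm_neg, norm_one, one_pow, one_mul, tri_succ]
          gcongr
          · exact norm_pow_le_pow_of_le hq.le ((le_tri N).trans (Nat.le_add_right _ _))
          · exact norm_thetaPartial_le hq.le N
      _ = _ := by ring
  simpa only [sum_range_thetaPartialTerm, Function.comp_def, add_zero] using hmain.add htail

end

end RogersFalseTheta

open RogersFalseTheta in
theorem stmt13 (q : ℂ) (hq : ‖q‖ < 1) :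
    ∑' n : ℕ, (-1 : ℂ) ^ n * q ^ (n * (n + 1) / 2) /
        ∏ k ∈ Finset.range n, (1 + q ^ (k + 1)) =
    ∑' n : ℕ, ∑ j ∈ Finset.Icc (-(n : ℤ)) ((n : ℤ) + 1),
      (-1 : ℂ) ^ (n + j.natAbs) * (1 + q ^ (n + 1)) * q ^ (n * (n + 1) / 2 + j.natAbs ^ 2) := by
  calc _ = gSeries q 0 0 := tsum_congr fun n => by simp [gTerm, negQPoch]
    _ = _ := by
      rw [tsum_congr sum_Icc_eq_thetaPartialTerm]
      exact (hasSum_thetaPartialTerm hq).tsum_eq.symm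
end
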